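/- Let a > 0 and μ ≥ 0, and for k ∈ ℝ⁴ ∖ {0} define the non-planar tadpole amplitude of the 1/p² model by A(k) = ∫₀^{min(‖k‖², ‖k‖^{-2})} (∫_{ℝ⁴} exp(i ω(k,p)) exp(−α(‖p‖² + a/‖p‖² + μ²)) dp) dα. Then there exists a constant C > 0 such that for all k ≠ 0, |A(k)| ≤ C (1 + 1/‖k‖²). That is, A(k) = F(k)/‖k‖² + G(k) with F and G bounded, so the non-planar tadpole produces only a finite renormalization of the a/p² term. -/

import Mathlib

open MeasureTheory

/-- The Moyal oscillation phase `ω(k,p) = k·Θp` on four-dimensional Moyal space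
with `θ = 1`. -/
noncomputable def moyalPhase (k p : EuclideanSpace ℝ (Fin 4)) : ℝ :=
  k 0 * p 1 - k 1 * p 0 + k 2 * p 3 - k 3 * p 2

/-!
Write the regulator as `e^{-αa/p²} = 1 - (1 - e^{-αa/p²})`. The first piece turns the momentum
integral into the Fourier transform of a Gaussian, `(π/α)² e^{-‖k‖²/4α}`, which is at most
`32π²/‖k‖⁴` uniformly in `α`: this is where the oscillation is used. Since `1 - e^{-x} ≤ x`, the
second piece is bounded in absolute value by `∫ αa e^{-αp²}/p² dp = π²a` (polar coordinates), again
uniformly in `α`. Integrating over `0 < α ≤ min(‖k‖², ‖k‖⁻²)`, whose length is at most `‖k‖²`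
and at most `1`, gives `32π²/‖k‖² + π²a`.
-/

open Real Set Module
open Complex hiding exp
open scoped RealInnerProductSpace

local notation "ℝ⁴" => EuclideanSpace ℝ (Fin 4)

noncomputable def moyalDual (k : ℝ⁴) : ℝ⁴ := !₂[-k 1, k 0, -k 3, k 2]

lemma moyalPhase_eq_inner (k p : ℝ⁴) : moyalPhase k p = ⟪moyalDual k, p⟫ := by
  simp [moyalPhase, moyalDual, PiLp.inner_apply, Fin.sum_univ_four]
  ring

lemma norm_moyalDual (k : ℝ⁴) : ‖moyalDual k‖ = ‖k‖ := by
  simp [EuclideanSpace.norm_eq, moyalDual, Fin.sum_univ_four]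
  ring_nf

lemma norm_integral_cexp_neg_mul_sq_norm_add_I_inner {V : Type*} [NormedAddCommGroup V]
    [InnerProductSpace ℝ V] [FiniteDimensional ℝ V] [MeasurableSpace V] [BorelSpace V]
    {α : ℝ} (hα : 0 < α) (w : V) :
    ‖∫ v : V, cexp (-α * ‖v‖ ^ 2 + I * ⟪w, v⟫)‖
      = (π / α) ^ (finrank ℝ V / 2 : ℝ) * rexp (-(‖w‖ ^ 2 / (4 * α))) := by
  rw [GaussianFourier.integral_cexp_neg_mul_sq_norm_add (by simpa using hα), norm_mul,
    ← ofReal_div, norm_cpow_eq_rpow_re_of_pos (by positivity), Complex.norm_exp]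
  congr 2
  · simp
  · rw [I_sq]; norm_cast; simp [neg_div]

lemma exp_neg_le_two_div_sq {x : ℝ} (hx : 0 < x) : rexp (-x) ≤ 2 / x ^ 2 := by
  have h := Real.pow_div_factorial_le_exp x hx.le 2
  rw [Nat.factorial_two, Nat.cast_ofNat] at h
  rw [Real.exp_neg, ← one_div, div_le_div_iff₀ (exp_pos x) (by positivity)]
  linarith

lemma div_sq_mul_exp_neg_div_le (b : ℝ) {c α : ℝ} (hc : 0 < c) (hα : 0 < α) :
    (b / α) ^ 2 * rexp (-(c / (4 * α))) ≤ 32 * b ^ 2 / c ^ 2 := by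
  calc (b / α) ^ 2 * rexp (-(c / (4 * α))) ≤ (b / α) ^ 2 * (2 / (c / (4 * α)) ^ 2) := by
        gcongr; exact exp_neg_le_two_div_sq (by positivity)
    _ = 32 * b ^ 2 / c ^ 2 := by field_simp; ring

lemma integral_fun_norm_euclideanSpace_fin_four (f : ℝ → ℝ) :
    ∫ p : ℝ⁴, f ‖p‖ = 2 * π ^ 2 * ∫ r in Ioi 0, r ^ 3 * f r := by
  rw [integral_fun_norm_addHaar volume f, finrank_euclideanSpace_fin, Measure.real,
    InnerProductSpace.volume_ball_of_dim_even (k := 2) (by simp)]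
  simp only [ENNReal.ofReal_one, finrank_euclideanSpace, Fintype.card_fin, one_pow,
    Nat.factorial_two, Nat.cast_ofNat, one_mul, Nat.add_one_sub_one, smul_eq_mul, nsmul_eq_mul]
  rw [ENNReal.toReal_ofReal (by positivity)]
  ring

lemma integral_Ioi_mul_exp_neg_mul_sq {α : ℝ} (hα : 0 < α) :
    ∫ r in Ioi 0, r * rexp (-α * r ^ 2) = (2 * α)⁻¹ := by
  have := integral_mul_cexp_neg_mul_sq (b := α) (by simpa using hα)
  apply ofReal_injective
  rw [← integral_complex_ofReal]
  push_cast
  exact this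

lemma one_sub_exp_neg_le (x : ℝ) : 1 - rexp (-x) ≤ x := by
  linarith [add_one_le_exp (-x)]

lemma one_sub_exp_neg_nonneg {x : ℝ} (hx : 0 ≤ x) : 0 ≤ 1 - rexp (-x) :=
  sub_nonneg.2 (exp_le_one_iff.2 (neg_nonpos.2 hx))

lemma integral_exp_neg_mul_sq_norm_mul_one_sub_exp_le {α a : ℝ} (hα : 0 < α) (ha : 0 ≤ a) :
    ∫ p : ℝ⁴, rexp (-α * ‖p‖ ^ 2) * (1 - rexp (-(α * a / ‖p‖ ^ 2))) ≤ π ^ 2 * a := by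
  rw [integral_fun_norm_euclideanSpace_fin_four
    (fun r => rexp (-α * r ^ 2) * (1 - rexp (-(α * a / r ^ 2))))]
  suffices h : ∫ r in Ioi 0, r ^ 3 * (rexp (-α * r ^ 2) * (1 - rexp (-(α * a / r ^ 2))))
      ≤ α * a * ∫ r in Ioi 0, r * rexp (-α * r ^ 2) by
    rw [integral_Ioi_mul_exp_neg_mul_sq hα] at h
    calc 2 * π ^ 2 * _ ≤ 2 * π ^ 2 * (α * a * (2 * α)⁻¹) := by gcongr
      _ = π ^ 2 * a := by field_simp
  rw [← integral_const_mul]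
  refine integral_mono_of_nonneg ?_
    ((integrable_mul_exp_neg_mul_sq hα).integrableOn.const_mul _) ?_ <;>
    filter_upwards [ae_restrict_mem measurableSet_Ioi] with r (hr : 0 < r)
  · have := one_sub_exp_neg_nonneg (x := α * a / r ^ 2) (by positivity)
    simp only [Pi.zero_apply]
    positivity
  · calc r ^ 3 * (rexp (-α * r ^ 2) * (1 - rexp (-(α * a / r ^ 2))))
        ≤ r ^ 3 * (rexp (-α * r ^ 2) * (α * a / r ^ 2)) := by
          gcongr; exact one_sub_exp_neg_le _
      _ = α * a * (r * rexp (-α * r ^ 2)) := by field_simp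

@[fun_prop]
lemma continuous_moyalPhase (k : ℝ⁴) : Continuous (moyalPhase k) := by
  unfold moyalPhase
  fun_prop

lemma norm_integral_moyal_gaussian_regulated_le (k : ℝ⁴) {α a : ℝ} (hα : 0 < α) (ha : 0 ≤ a)
    (μ : ℝ) :
    ‖∫ p : ℝ⁴, cexp (I * moyalPhase k p) * rexp (-α * (‖p‖ ^ 2 + a / ‖p‖ ^ 2 + μ ^ 2))‖
      ≤ (π / α) ^ 2 * rexp (-(‖k‖ ^ 2 / (4 * α))) + π ^ 2 * a := by
  set g : ℝ⁴ → ℂ := fun p => cexp (I * moyalPhase k p) * rexp (-α * ‖p‖ ^ 2)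
  set h : ℝ⁴ → ℂ := fun p =>
    cexp (I * moyalPhase k p) * (rexp (-α * ‖p‖ ^ 2) * (1 - rexp (-(α * a / ‖p‖ ^ 2))) : ℝ)
  have hsplit : ∀ p, cexp (I * moyalPhase k p) * rexp (-α * (‖p‖ ^ 2 + a / ‖p‖ ^ 2 + μ ^ 2))
      = rexp (-α * μ ^ 2) * (g p - h p) := by
    intro p
    have : rexp (-α * (‖p‖ ^ 2 + a / ‖p‖ ^ 2 + μ ^ 2))
        = rexp (-α * μ ^ 2) * (rexp (-α * ‖p‖ ^ 2) * rexp (-(α * a / ‖p‖ ^ 2))) := by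
      rw [← Real.exp_add, ← Real.exp_add]
      ring_nf
    simp only [g, h, this]
    push_cast
    ring
  have hg_gaussian : g = fun p => cexp (-α * ‖p‖ ^ 2 + I * ⟪moyalDual k, p⟫) := by
    funext p
    simp only [g, moyalPhase_eq_inner, ofReal_exp, ← Complex.exp_add]
    push_cast
    ring_nf
  have hg : Integrable g := hg_gaussian ▸
    GaussianFourier.integrable_cexp_neg_mul_sq_norm_add (by simpa using hα) I _
  have hnorm_h : ∀ p, ‖h p‖ = rexp (-α * ‖p‖ ^ 2) * (1 - rexp (-(α * a / ‖p‖ ^ 2))) := by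
    intro p
    have := one_sub_exp_neg_nonneg (x := α * a / ‖p‖ ^ 2) (by positivity)
    rw [norm_mul, norm_exp_I_mul_ofReal, one_mul, norm_real, norm_of_nonneg (by positivity)]
  have hh : Integrable h := by
    refine hg.norm.mono' ?_ ?_
    · fun_prop
    · refine ae_of_all _ fun p => ?_
      rw [hnorm_h, norm_mul, norm_exp_I_mul_ofReal, one_mul, norm_real,
        norm_of_nonneg (exp_pos _).le]
      exact mul_le_of_le_one_right (exp_pos _).le (by linarith [exp_pos (-(α * a / ‖p‖ ^ 2))])
  have hg_norm : ‖∫ p, g p‖ = (π / α) ^ 2 * rexp (-(‖k‖ ^ 2 / (4 * α))) := by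
    rw [hg_gaussian, norm_integral_cexp_neg_mul_sq_norm_add_I_inner hα, norm_moyalDual,
      finrank_euclideanSpace_fin]
    norm_num
  have hh_norm : ‖∫ p, h p‖ ≤ π ^ 2 * a :=
    (norm_integral_le_integral_norm h).trans <| by
      simpa only [hnorm_h] using integral_exp_neg_mul_sq_norm_mul_one_sub_exp_le hα ha
  simp_rw [hsplit]
  rw [integral_const_mul, integral_sub hg hh, norm_mul, norm_real, norm_of_nonneg (exp_pos _).le]
  calc rexp (-α * μ ^ 2) * ‖(∫ p, g p) - ∫ p, h p‖ ≤ 1 * (‖∫ p, g p‖ + ‖∫ p, h p‖) := by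
        gcongr
        · exact exp_le_one_iff.2 (by nlinarith [sq_nonneg μ])
        · exact norm_sub_le _ _
    _ ≤ _ := by rw [one_mul, hg_norm]; gcongr

theorem nonplanar_tadpole_finite_renormalization_general (a μ : ℝ) (ha : 0 < a) :
    ∃ C > (0 : ℝ), ∀ k : EuclideanSpace ℝ (Fin 4), k ≠ 0 →
      ‖∫ α in (0 : ℝ)..(min (‖k‖ ^ 2) ((‖k‖ ^ 2)⁻¹)),
          ∫ p : EuclideanSpace ℝ (Fin 4),
            Complex.exp (Complex.I * (moyalPhase k p : ℂ)) *
              Real.exp (-α * (‖p‖ ^ 2 + a / ‖p‖ ^ 2 + μ ^ 2))‖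
        ≤ C * (1 + 1 / ‖k‖ ^ 2) := by
  refine ⟨32 * π ^ 2 + π ^ 2 * a, by positivity, fun k hk => ?_⟩
  set K := ‖k‖ ^ 2
  have hK : 0 < K := by have := norm_pos_iff.2 hk; positivity
  set m := min K K⁻¹
  have hm : 0 ≤ m := le_min hK.le (inv_nonneg.2 hK.le)
  have hmK : m ≤ K := min_le_left _ _
  have hm1 : m ≤ 1 := min_le_iff.2 ((le_total K 1).imp id inv_le_one_of_one_le₀)
  have hinner : ∀ α ∈ uIoc 0 m, ‖∫ p : ℝ⁴, cexp (I * moyalPhase k p) *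
      rexp (-α * (‖p‖ ^ 2 + a / ‖p‖ ^ 2 + μ ^ 2))‖ ≤ 32 * π ^ 2 / K ^ 2 + π ^ 2 * a := by
    intro α hα
    have hα : 0 < α := (uIoc_of_le hm ▸ hα).1
    exact (norm_integral_moyal_gaussian_regulated_le k hα ha.le μ).trans
      (add_le_add_left (div_sq_mul_exp_neg_div_le π hK hα) _)
  calc _ ≤ (32 * π ^ 2 / K ^ 2 + π ^ 2 * a) * |m - 0| :=
        intervalIntegral.norm_integral_le_of_norm_le_const hinner
    _ = 32 * π ^ 2 / K ^ 2 * m + π ^ 2 * a * m := by rw [sub_zero, abs_of_nonneg hm]; ring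
    _ ≤ 32 * π ^ 2 / K ^ 2 * K + π ^ 2 * a * 1 := by gcongr
    _ ≤ (32 * π ^ 2 + π ^ 2 * a) * (1 + 1 / K) := by
        field_simp
        nlinarith [pi_pos]

/-- The non-planar tadpole of the `1/p²` model, with the Schwinger parameter of
its internal line restricted to `α < min(‖k‖², ‖k‖⁻²)` by the multiscale slicing,
is bounded by `C(1 + 1/‖k‖²)`: it produces only a finite renormalization of the
`a/p²` term. -/
theorem nonplanar_tadpole_finite_renormalization (a μ : ℝ) (ha : 0 < a) (hμ : 0 ≤ μ) :
    ∃ C > (0 : ℝ), ∀ k : EuclideanSpace ℝ (Fin 4), k ≠ 0 →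
      ‖∫ α in (0 : ℝ)..(min (‖k‖ ^ 2) ((‖k‖ ^ 2)⁻¹)),
          ∫ p : EuclideanSpace ℝ (Fin 4),
            Complex.exp (Complex.I * (moyalPhase k p : ℂ)) *
              Real.exp (-α * (‖p‖ ^ 2 + a / ‖p‖ ^ 2 + μ ^ 2))‖
        ≤ C * (1 + 1 / ‖k‖ ^ 2) :=
  nonplanar_tadpole_finite_renormalization_general a μ ha
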